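/- Let X be a càdlàg function without upward jumps, X_0 = x, with continuous increasing running maximum X̄. Let γ : [x,∞) → [0,1) be measurable and U_t = X_t - ∫_{(0,t]} γ(X̄_s) dX̄_s the latent tax process. Define δ_x^γ(s) = γ(γ̄_x^{-1}(s)) where γ̄_x(s) = x + ∫_x^s (1-γ(y)) dy. Then U satisfies the natural tax equation: U_t = X_t - ∫_{(0,t]} δ_x^γ(Ū_s) dX̄_s for all t ≥ 0, where Ū_s = sup_{r ≤ s} U_r. -/

import Mathlib

open MeasureTheory Set Filter

/-- Running maximum of a path on `[0, t]`. -/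
noncomputable def runMax (X : ℝ → ℝ) (t : ℝ) : ℝ := sSup (X '' Set.Icc 0 t)

/-!
Since `X` has no upward jumps, its running maximum `M = F` is continuous, so on `(0, s]` the
Stieltjes measure `dM` is pushed forward by `M` onto Lebesgue measure on `(x, M s]`. Hence
`∫_{(0,s]} γ (M u) dM u = Φ (M s)` with `Φ m = ∫_x^m γ`, that is `U = X - Φ ∘ M`. As `0 ≤ γ < 1`,
both `Φ` and `m ↦ m - Φ m = γbar m` are nondecreasing, which forces the running maximum of `U` to
be `γbar ∘ M`. Therefore `γbarInv (runMax U s) = M s`, and the two tax equations have the same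
integrand.
-/

open scoped Topology Interval

theorem bddAbove_image_Icc_of_cadlag {X : ℝ → ℝ} {a b : ℝ}
    (hrc : ∀ t ∈ Icc a b, ContinuousWithinAt X (Ici t) t)
    (hll : ∀ t ∈ Ioc a b, ∃ l, Tendsto X (𝓝[<] t) (𝓝 l)) :
    BddAbove (X '' Icc a b) := by
  refine isCompact_Icc.induction_on (by simp) (fun s t hst h => h.mono (image_mono hst))
    (fun s t hs ht => by rw [image_union]; exact hs.union ht) fun r hr => ?_
  suffices ∃ K, ∀ᶠ y in 𝓝[Icc a b] r, X y ≤ K by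
    obtain ⟨K, hK⟩ := this
    exact ⟨{y | X y ≤ K}, hK, K, by rintro _ ⟨y, hy, rfl⟩; exact hy⟩
  have h_right : ∀ᶠ y in 𝓝[≥] r, X y ≤ X r + 1 :=
    (hrc r hr).eventually_le_const (lt_add_one _)
  rcases hr.1.eq_or_lt with rfl | har
  · exact ⟨_, nhdsWithin_mono _ Icc_subset_Ici_self h_right⟩
  · obtain ⟨l, hl⟩ := hll r ⟨har, hr.2⟩
    have h_left : ∀ᶠ y in 𝓝[<] r, X y ≤ l + 1 := hl.eventually_le_const (lt_add_one _)
    refine ⟨max (X r + 1) (l + 1), nhdsWithin_le_nhds ?_⟩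
    rw [← nhdsLT_sup_nhdsGE r]
    exact eventually_sup.2 ⟨h_left.mono fun y hy => hy.trans (le_max_right _ _),
      h_right.mono fun y hy => hy.trans (le_max_left _ _)⟩

section runMax

variable {X U : ℝ → ℝ} {r s t c : ℝ}

theorem runMax_zero (X : ℝ → ℝ) : runMax X 0 = X 0 := by
  rw [runMax, Icc_self, image_singleton, csSup_singleton]

theorem le_runMax (h : BddAbove (X '' Icc 0 t)) (hr : r ∈ Icc 0 t) : X r ≤ runMax X t :=
  le_csSup h (mem_image_of_mem X hr)

theorem runMax_le (ht : 0 ≤ t) (h : ∀ r ∈ Icc 0 t, X r ≤ c) : runMax X t ≤ c :=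
  csSup_le ⟨X 0, mem_image_of_mem X ⟨le_rfl, ht⟩⟩ (forall_mem_image.2 h)

theorem runMax_mono (h : BddAbove (X '' Icc 0 t)) (hr : 0 ≤ r) (hrt : r ≤ t) :
    runMax X r ≤ runMax X t :=
  runMax_le hr fun _ hu => le_runMax h ⟨hu.1, hu.2.trans hrt⟩

theorem exists_lt_of_lt_runMax (ht : 0 ≤ t) (h : c < runMax X t) : ∃ r ∈ Icc 0 t, c < X r := by
  obtain ⟨_, ⟨r, hr, rfl⟩, hc⟩ :=
    exists_lt_of_lt_csSup ((nonempty_Icc.2 ht).image X) h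
  exact ⟨r, hr, hc⟩

theorem runMax_eq_sub_of_eq_sub_comp_runMax {Φ : ℝ → ℝ} (hs : 0 ≤ s)
    (hbdd : BddAbove (X '' Icc 0 s)) (hΦ : MonotoneOn Φ (Ici (X 0)))
    (hΦ' : MonotoneOn (fun m => m - Φ m) (Ici (X 0)))
    (hU : ∀ r ∈ Icc 0 s, U r = X r - Φ (runMax X r)) :
    runMax U s = runMax X s - Φ (runMax X s) := by
  have hbdd_r : ∀ r ∈ Icc 0 s, BddAbove (X '' Icc 0 r) := fun r hr =>
    hbdd.mono (image_mono (Icc_subset_Icc_right hr.2))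
  have hX0_le : ∀ r ∈ Icc 0 s, X 0 ≤ runMax X r := fun r hr =>
    le_runMax (hbdd_r r hr) ⟨le_rfl, hr.1⟩
  have hmono : ∀ r ∈ Icc 0 s, runMax X r ≤ runMax X s := fun r hr => runMax_mono hbdd hr.1 hr.2
  have hub : ∀ r ∈ Icc 0 s, U r ≤ runMax X s - Φ (runMax X s) := fun r hr =>
    calc U r = X r - Φ (runMax X r) := hU r hr
      _ ≤ runMax X r - Φ (runMax X r) := by gcongr; exact le_runMax (hbdd_r r hr) ⟨hr.1, le_rfl⟩
      _ ≤ runMax X s - Φ (runMax X s) :=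
        hΦ' (hX0_le r hr) ((hX0_le r hr).trans (hmono r hr)) (hmono r hr)
  refine le_antisymm (runMax_le hs hub) (le_of_forall_pos_le_add fun ε hε => ?_)
  obtain ⟨r, hr, hXr⟩ := exists_lt_of_lt_runMax hs (sub_lt_self (runMax X s) hε)
  have hΦr : Φ (runMax X r) ≤ Φ (runMax X s) :=
    hΦ (hX0_le r hr) ((hX0_le r hr).trans (hmono r hr)) (hmono r hr)
  have hUr : U r ≤ runMax U s := le_runMax ⟨_, forall_mem_image.2 hub⟩ hr
  linarith [hU r hr]

theorem Monotone.continuousWithinAt_Iio_of_eq_runMax {f : ℝ → ℝ} (hf : Monotone f)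
    (hfX : ∀ t ≥ 0, f t = runMax X t) (hbdd : BddAbove (X '' Icc 0 r)) (hr : 0 < r) {l : ℝ}
    (hl : Tendsto X (𝓝[<] r) (𝓝 l)) (hjump : X r ≤ l) :
    ContinuousWithinAt f (Iio r) r := by
  rw [hf.continuousWithinAt_Iio_iff_leftLim_eq]
  refine le_antisymm (hf.leftLim_le le_rfl) ?_
  have hX_le : ∀ u ∈ Ico 0 r, X u ≤ Function.leftLim f r := fun u hu =>
    calc X u ≤ runMax X u := le_runMax (hbdd.mono (image_mono (Icc_subset_Icc_right hu.2.le)))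
          ⟨hu.1, le_rfl⟩
      _ = f u := (hfX u hu.1).symm
      _ ≤ Function.leftLim f r := hf.le_leftLim hu.2
  rw [hfX r hr.le]
  refine runMax_le hr.le fun u hu => ?_
  rcases hu.2.lt_or_eq with hur | rfl
  · exact hX_le u ⟨hu.1, hur⟩
  · refine hjump.trans (_root_.le_of_tendsto hl ?_)
    filter_upwards [Ioo_mem_nhdsLT hr] with v hv using hX_le v ⟨hv.1.le, hv.2⟩

end runMax

theorem StieltjesFunction.continuousOn_Icc_of_continuousWithinAt_Iio (f : StieltjesFunction ℝ)
    {a b : ℝ} (h : ∀ r ∈ Ioc a b, ContinuousWithinAt f (Iio r) r) :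
    ContinuousOn f (Icc a b) := by
  intro r hr
  rcases hr.1.eq_or_lt with rfl | har
  · exact (f.right_continuous a).mono Icc_subset_Ici_self
  · exact (continuousAt_iff_continuous_left'_right'.2 ⟨h r ⟨har, hr.2⟩,
      (f.right_continuous r).mono Ioi_subset_Ici_self⟩).continuousWithinAt

theorem Monotone.exists_preimage_Iic_inter_Ioc_eq_Ioc {f : ℝ → ℝ} (hf : Monotone f) {a b c : ℝ}
    (hab : a ≤ b) (hcont : ContinuousOn f (Icc a b)) (hc : f a ≤ c) :
    ∃ τ, f ⁻¹' Iic c ∩ Ioc a b = Ioc a τ ∧ f τ = min c (f b) := by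
  set S := Icc a b ∩ f ⁻¹' {min c (f b)}
  have hS_ne : S.Nonempty := by
    obtain ⟨τ, hτ, hfτ⟩ := intermediate_value_Icc hab hcont
      ⟨le_min hc (hf hab), min_le_right c (f b)⟩
    exact ⟨τ, hτ, hfτ⟩
  -- the last time at which `f` takes the value `min c (f b)`
  obtain ⟨⟨-, hτb⟩, hfτ⟩ : sSup S ∈ S :=
    (hcont.preimage_isClosed_of_isClosed isClosed_Icc isClosed_singleton).csSup_mem hS_ne
      ⟨b, fun r hr => hr.1.2⟩
  refine ⟨sSup S, ?_, hfτ⟩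
  ext r
  simp only [mem_inter_iff, mem_preimage, mem_Iic, mem_Ioc]
  constructor
  · rintro ⟨hrc, har, hrb⟩
    refine ⟨har, not_lt.1 fun hτr => (le_csSup ⟨b, fun r hr => hr.1.2⟩ ?_).not_gt hτr⟩
    have : f r = min c (f b) := le_antisymm (le_min hrc (hf hrb)) (hfτ ▸ hf hτr.le)
    exact ⟨⟨har.le, hrb⟩, this⟩
  · rintro ⟨har, hrτ⟩
    exact ⟨(hf hrτ).trans (hfτ.le.trans (min_le_left c (f b))), har, hrτ.trans hτb⟩

theorem StieltjesFunction.map_restrict_Ioc_of_continuousOn (f : StieltjesFunction ℝ) {a b : ℝ}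
    (hab : a ≤ b) (hcont : ContinuousOn f (Icc a b)) :
    (f.measure.restrict (Ioc a b)).map f = volume.restrict (Ioc (f a) (f b)) := by
  have hfm : Measurable f := f.mono.measurable
  refine (Measure.ext_of_Iic _ _ fun c => ?_).symm
  rw [Measure.map_apply hfm measurableSet_Iic, Measure.restrict_apply (hfm measurableSet_Iic),
    Measure.restrict_apply measurableSet_Iic, inter_comm, Ioc_inter_Iic, Real.volume_Ioc]
  rcases lt_or_ge c (f a) with hca | hac
  · have hempty : f ⁻¹' Iic c ∩ Ioc a b = ∅ :=
      eq_empty_of_forall_notMem fun r ⟨hrc, har, _⟩ => (hca.trans_le (f.mono har.le)).not_ge hrc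
    rw [hempty, measure_empty, ENNReal.ofReal_eq_zero]
    linarith [min_le_right (f b) c]
  · obtain ⟨τ, hτ, hfτ⟩ := f.mono.exists_preimage_Iic_inter_Ioc_eq_Ioc hab hcont hac
    rw [hτ, f.measure_Ioc, hfτ, min_comm]

theorem StieltjesFunction.setIntegral_comp_Ioc_of_continuousOn {E : Type*}
    [NormedAddCommGroup E] [NormedSpace ℝ E] (f : StieltjesFunction ℝ) {a b : ℝ} (hab : a ≤ b)
    (hcont : ContinuousOn f (Icc a b)) {g : ℝ → E}
    (hg : AEStronglyMeasurable g (volume.restrict (Ioc (f a) (f b)))) :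
    ∫ u in Ioc a b, g (f u) ∂f.measure = ∫ y in Ioc (f a) (f b), g y := by
  rw [← f.map_restrict_Ioc_of_continuousOn hab hcont] at hg ⊢
  exact (integral_map f.mono.measurable.aemeasurable hg).symm

theorem intervalIntegrable_of_norm_le_const {E : Type*} [NormedAddCommGroup E] {g : ℝ → E}
    {a b C : ℝ} (hg : AEStronglyMeasurable g volume) (hC : ∀ y ∈ Ι a b, ‖g y‖ ≤ C) :
    IntervalIntegrable g volume a b :=
  (intervalIntegrable_const (c := C)).mono_fun' hg.restrict
    ((ae_restrict_iff' measurableSet_uIoc).2 (ae_of_all _ hC))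

section intervalIntegral

variable {g : ℝ → ℝ} {x : ℝ}

theorem monotoneOn_intervalIntegral_of_nonneg (hg : ∀ y ≥ x, 0 ≤ g y)
    (hgi : ∀ m ≥ x, IntervalIntegrable g volume x m) :
    MonotoneOn (fun m => ∫ y in x..m, g y) (Ici x) := fun _ hm m' hm' hmm' =>
  intervalIntegral.integral_mono_interval le_rfl hm hmm'
    ((ae_restrict_iff' measurableSet_Ioc).2 (ae_of_all _ fun y hy => hg y hy.1.le)) (hgi m' hm')

theorem monotoneOn_sub_intervalIntegral_of_le_one (hg : ∀ y ≥ x, g y ≤ 1)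
    (hgi : ∀ m ≥ x, IntervalIntegrable g volume x m) :
    MonotoneOn (fun m => m - ∫ y in x..m, g y) (Ici x) := by
  intro m hm m' hm' hmm'
  have hincr : ∫ y in m..m', g y ≤ ∫ _ in m..m', (1 : ℝ) :=
    intervalIntegral.integral_mono_on hmm' ((hgi m hm).symm.trans (hgi m' hm'))
      intervalIntegrable_const fun y hy => hg y (hm.trans hy.1)
  rw [intervalIntegral.integral_const, smul_eq_mul, mul_one,
    ← intervalIntegral.integral_interval_sub_left (hgi m' hm') (hgi m hm)] at hincr
  dsimp only
  linarith

end intervalIntegral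

theorem latent_is_natural
    (x : ℝ) (X : ℝ → ℝ)
    (hX0 : X 0 = x)
    (hrc : ∀ t ≥ (0:ℝ), ContinuousWithinAt X (Set.Ici t) t)
    (hll : ∀ t > (0:ℝ), ∃ l : ℝ, Tendsto X (nhdsWithin t (Set.Iio t)) (nhds l))
    (hnuj : ∀ t > (0:ℝ), ∀ l : ℝ,
      Tendsto X (nhdsWithin t (Set.Iio t)) (nhds l) → X t ≤ l)
    (F : StieltjesFunction ℝ) (hF : ∀ t ≥ (0:ℝ), F t = runMax X t)
    (γ : ℝ → ℝ) (hγmeas : Measurable γ)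
    (hγ : ∀ y ≥ x, 0 ≤ γ y ∧ γ y < 1)
    -- the latent tax process:
    (U : ℝ → ℝ)
    (hU : ∀ t ≥ (0:ℝ), U t = X t - ∫ s in Set.Ioc 0 t, γ (runMax X s) ∂F.measure)
    (γbar : ℝ → ℝ)
    (hγbar : ∀ s ≥ x, γbar s = x + ∫ y in x..s, (1 - γ y))
    (γbarInv : ℝ → ℝ)
    (hγbarInv : ∀ s ≥ x, γbarInv (γbar s) = s) :
    -- U satisfies the natural tax equation with rate δ_x^γ = γ ∘ γbarInv:
    ∀ t ≥ (0:ℝ), U t = X t - ∫ s in Set.Ioc 0 t, γ (γbarInv (runMax U s)) ∂F.measure := by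
  have hbdd (b : ℝ) : BddAbove (X '' Icc 0 b) :=
    bddAbove_image_Icc_of_cadlag (fun t ht => hrc t ht.1) (fun t ht => hll t ht.1)
  have hx_le (s : ℝ) (hs : 0 ≤ s) : x ≤ runMax X s := hX0 ▸ le_runMax (hbdd s) ⟨le_rfl, hs⟩
  have hcont (b : ℝ) : ContinuousOn F (Icc 0 b) :=
    F.continuousOn_Icc_of_continuousWithinAt_Iio fun r hr =>
      have ⟨l, hl⟩ := hll r hr.1
      F.mono.continuousWithinAt_Iio_of_eq_runMax hF (hbdd r) hr.1 hl (hnuj r hr.1 l hl)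
  have hγi (m : ℝ) (hm : m ≥ x) : IntervalIntegrable γ volume x m :=
    intervalIntegrable_of_norm_le_const (C := 1) hγmeas.aestronglyMeasurable fun y hy => by
      rw [uIoc_of_le hm] at hy
      obtain ⟨hγ_nonneg, hγ_lt⟩ := hγ y hy.1.le
      rw [Real.norm_eq_abs, abs_of_nonneg hγ_nonneg]
      exact hγ_lt.le
  have hocc (s : ℝ) (hs : 0 ≤ s) :
      ∫ u in Ioc 0 s, γ (runMax X u) ∂F.measure = ∫ y in x..runMax X s, γ y := by
    rw [setIntegral_congr_fun measurableSet_Ioc fun u hu => by rw [← hF u hu.1.le],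
      F.setIntegral_comp_Ioc_of_continuousOn hs (hcont s) hγmeas.aestronglyMeasurable,
      hF 0 le_rfl, runMax_zero, hX0, hF s hs, intervalIntegral.integral_of_le (hx_le s hs)]
  have hγbar_eq (m : ℝ) (hm : m ≥ x) : γbar m = m - ∫ y in x..m, γ y := by
    rw [hγbar m hm, intervalIntegral.integral_sub intervalIntegrable_const (hγi m hm),
      intervalIntegral.integral_const, smul_eq_mul, mul_one]
    ring
  have hUmax (s : ℝ) (hs : 0 ≤ s) : runMax U s = γbar (runMax X s) := by
    rw [hγbar_eq _ (hx_le s hs)]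
    refine runMax_eq_sub_of_eq_sub_comp_runMax (U := U) (Φ := fun m => ∫ y in x..m, γ y) hs
      (hbdd s) ?_ ?_ fun r hr => by rw [hU r hr.1, hocc r hr.1]
    · rw [hX0]
      exact monotoneOn_intervalIntegral_of_nonneg (fun y hy => (hγ y hy).1) hγi
    · rw [hX0]
      exact monotoneOn_sub_intervalIntegral_of_le_one (fun y hy => (hγ y hy).2.le) hγi
  intro t ht
  rw [hU t ht]
  congr 1
  refine setIntegral_congr_fun measurableSet_Ioc fun s hs => ?_
  rw [hUmax s hs.1.le, hγbarInv _ (hx_le s hs.1.le)]
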